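/- arXiv:2409.17218 — 3 statements merged into one kernel-verified Lean document; each statement's English description precedes it below -/
import Mathlib

section
/- Let G=(V,E) be a weighted graph with boundary ∂=A⊔B⊔C, let n≥2 be an integer, and suppose ρ:E→ℤ_{≥0} satisfies ρ(L)≥n for every path L∈𝒫_{A∪B,C}. Let (AB)₀={x∈V : d_ρ(x,A∪B)=0} be the set of vertices reachable from A∪B along a path on which ρ vanishes on every edge. Then for every edge e both of whose endpoints lie in (AB)₀ and every path L∈𝒫_{A∪B,C} with e∈L, one has ρ(L)−ρ(e)≥n. -/
open scoped Classical

noncomputable section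

namespace RTN

/-! ## Set partitions -/

/-- Number of blocks of a set partition (as an integer). -/
def nb {α : Type*} (p : Setoid α) : ℤ := Nat.card (Quotient p)

/-- The partition distance `d(p,q) = #(p) + #(q) - 2 #(p ⊔ q)`. -/
def pdist {α : Type*} (p q : Setoid α) : ℤ := nb p + nb q - 2 * nb (p ⊔ q)

lemma pdist_comm {α : Type*} (p q : Setoid α) : pdist p q = pdist q p := by
  unfold pdist
  rw [sup_comm p q]
  ring

/-- `k` is a singlet (block of size one) of the partition `p`. -/
def IsSinglet {α : Type*} (p : Setoid α) (k : α) : Prop := ∀ y, p.r k y → y = k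

/-- The number of singlets `#₁(p)` of a partition. -/
def nS {α : Type*} (p : Setoid α) : ℤ := Nat.card {k : α // IsSinglet p k}

/-- The singlet distance `d₁(s₁,s₂) = #₁(s₁) + #₁(s₂) - 2 #₁(s₁ ⊔ s₂)`. -/
def sdist {α : Type*} (s₁ s₂ : Setoid α) : ℤ := nS s₁ + nS s₂ - 2 * nS (s₁ ⊔ s₂)

/-- The singlet pattern `s(p)`: the coarsest partition whose singlets are exactly
those of `p` (all non-singlet elements lie in one block). -/
def spat {α : Type*} (p : Setoid α) : Setoid α where
  r x y := x = y ∨ (¬ IsSinglet p x ∧ ¬ IsSinglet p y)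
  iseqv := by
    refine ⟨fun x => Or.inl rfl, ?_, ?_⟩
    · intro x y h
      rcases h with rfl | ⟨hx, hy⟩
      · exact Or.inl rfl
      · exact Or.inr ⟨hy, hx⟩
    · intro x y z h1 h2
      rcases h1 with rfl | ⟨hx, hy⟩
      · exact h2
      · rcases h2 with rfl | ⟨_, hz⟩
        · exact Or.inr ⟨hx, hy⟩
        · exact Or.inr ⟨hx, hz⟩

/-- The bit `b^k(p)`: `0` if `p` has a singlet at `k`, else `1`. -/
def bbit {α : Type*} (p : Setoid α) (k : α) : ℤ := if IsSinglet p k then 0 else 1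

/-- The size of the block of `p` containing `x`. -/
def blockSize {α : Type*} (p : Setoid α) (x : α) : ℕ := Nat.card {y : α // p.r x y}

noncomputable instance {α : Type*} [Finite α] (s : Setoid α) : Fintype (Quotient s) :=
  Fintype.ofFinite _

/-! ## Permutations -/

/-- The partition of `α` into orbits (cycles) of a permutation. -/
def orbitSetoid {α : Type*} (g : Equiv.Perm α) : Setoid α where
  r x y := ∃ k : ℤ, (g ^ k) x = y
  iseqv := by
    refine ⟨fun x => ⟨0, by simp⟩, ?_, ?_⟩
    · rintro x y ⟨k, rfl⟩
      exact ⟨-k, by simp [← Equiv.Perm.mul_apply, ← zpow_add]⟩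
    · rintro x y z ⟨k, rfl⟩ ⟨l, rfl⟩
      exact ⟨l + k, by rw [zpow_add, Equiv.Perm.mul_apply]⟩

/-- The number of cycles `#(g)` of a permutation (fixed points included). -/
def ncyc {α : Type*} (g : Equiv.Perm α) : ℤ := nb (orbitSetoid g)

/-- The Cayley distance `d(g,h) = N - #(g h⁻¹)`. -/
def cayley {α : Type*} [Fintype α] (g h : Equiv.Perm α) : ℤ :=
  (Fintype.card α : ℤ) - ncyc (g * h⁻¹)

lemma orbitSetoid_inv {α : Type*} (g : Equiv.Perm α) : orbitSetoid g⁻¹ = orbitSetoid g := by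
  apply Setoid.ext
  intro x y
  constructor
  · rintro ⟨k, hk⟩
    exact ⟨-k, by rw [← inv_zpow']; exact hk⟩
  · rintro ⟨k, hk⟩
    exact ⟨-k, by rw [inv_zpow', neg_neg]; exact hk⟩

lemma cayley_comm {α : Type*} [Fintype α] (g h : Equiv.Perm α) : cayley g h = cayley h g := by
  unfold cayley ncyc
  rw [show h * g⁻¹ = (g * h⁻¹)⁻¹ by rw [mul_inv_rev, inv_inv], orbitSetoid_inv]

/-- Coarse graining of a partition `p` by the blocks of `P(g₀)`: the partition of the set
of blocks of `P(g₀)` induced by `p ⊔ P(g₀)`. -/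
def coarse {α : Type*} (g₀ : Equiv.Perm α) (p : Setoid α) :
    Setoid (Quotient (orbitSetoid g₀)) where
  r u v := ∃ x y : α, Quotient.mk (orbitSetoid g₀) x = u ∧ Quotient.mk (orbitSetoid g₀) y = v ∧
    (p ⊔ orbitSetoid g₀).r x y
  iseqv := by
    refine ⟨?_, ?_, ?_⟩
    · intro u
      obtain ⟨x, rfl⟩ := Quotient.exists_rep u
      exact ⟨x, x, rfl, rfl, (p ⊔ orbitSetoid g₀).iseqv.refl x⟩
    · rintro u v ⟨x, y, hx, hy, hxy⟩
      exact ⟨y, x, hy, hx, (p ⊔ orbitSetoid g₀).iseqv.symm hxy⟩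
    · rintro u v w ⟨x, y, hx, hy, hxy⟩ ⟨y', z, hy', hz, hyz⟩
      refine ⟨x, z, hx, hz, ?_⟩
      have h1 : (orbitSetoid g₀).r y y' := Quotient.exact (hy.trans hy'.symm)
      have h2 : (p ⊔ orbitSetoid g₀).r y y' :=
        (le_sup_right : orbitSetoid g₀ ≤ p ⊔ orbitSetoid g₀) h1
      exact (p ⊔ orbitSetoid g₀).iseqv.trans hxy
        ((p ⊔ orbitSetoid g₀).iseqv.trans h2 hyz)

/-- The coarse graining `q_{g₀}(g) ∈ P_{#(g₀)}` of a permutation `g`. -/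
def qc {α : Type*} (g₀ g : Equiv.Perm α) : Setoid (Quotient (orbitSetoid g₀)) :=
  coarse g₀ (orbitSetoid g)

/-! ## Standard reflected-entropy boundary elements -/

/-- `g_B`, the product of `n` disjoint `m`-cycles `(k,ℓ) ↦ (k,ℓ+1)`. -/
def gB (n m : ℕ) : Equiv.Perm (Fin n × Fin m) :=
  Equiv.prodCongr (Equiv.refl (Fin n)) (finRotate m)

/-- `γ`, cyclically shifting `k ↦ k+1` on the elements with `ℓ` in the lower half,
fixing the rest. -/
def gamma (n m : ℕ) : Equiv.Perm (Fin n × Fin m) where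
  toFun x := if m / 2 ≤ (x.2 : ℕ) then (finRotate n x.1, x.2) else x
  invFun x := if m / 2 ≤ (x.2 : ℕ) then ((finRotate n).symm x.1, x.2) else x
  left_inv := by
    intro x
    by_cases h : m / 2 ≤ (x.2 : ℕ) <;> simp [h, -finRotate_apply, -finRotate_symm_apply]
  right_inv := by
    intro x
    by_cases h : m / 2 ≤ (x.2 : ℕ) <;> simp [h, -finRotate_apply, -finRotate_symm_apply]

/-- `g_A = γ⁻¹ g_B γ`. -/
def gA (n m : ℕ) : Equiv.Perm (Fin n × Fin m) :=
  (gamma n m)⁻¹ * gB n m * gamma n m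

/-- For even `m`, `Fin m` splits into an upper and a lower half. -/
def halfEquiv (m : ℕ) (hm : m % 2 = 0) : Fin 2 × Fin (m / 2) ≃ Fin m :=
  finProdFinEquiv.trans (finCongr (by omega))

/-- `X`, the product of the `2n` disjoint `(m/2)`-cycles cyclically permuting the
upper and the lower half of each block `k`. -/
def Xel (n m : ℕ) (hm : m % 2 = 0) : Equiv.Perm (Fin n × Fin m) :=
  Equiv.prodCongr (Equiv.refl (Fin n))
    ((halfEquiv m hm).permCongr
      (Equiv.prodCongr (Equiv.refl (Fin 2)) (finRotate (m / 2))))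

/-- The set of blocks of `P(X)`; it has `2n` elements. -/
abbrev BX (n m : ℕ) (hm : m % 2 = 0) := Quotient (orbitSetoid (Xel n m hm))

/-- `q_A = q_X(g_A) ∈ P_{2n}`. -/
def qAel (n m : ℕ) (hm : m % 2 = 0) : Setoid (BX n m hm) :=
  qc (Xel n m hm) (gA n m)

/-- `q_B = q_X(g_B) ∈ P_{2n}`. -/
def qBel (n m : ℕ) (hm : m % 2 = 0) : Setoid (BX n m hm) :=
  qc (Xel n m hm) (gB n m)

/-! ## Doubled elements (two copies) -/

/-- Two copies of the index set `{1,…,mn}`. -/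
abbrev DIdx (n m : ℕ) := (Fin n × Fin m) ⊕ (Fin n × Fin m)

/-- `g̃_A = g_A ⊕ g_A`. -/
def gAt (n m : ℕ) : Equiv.Perm (DIdx n m) := Equiv.sumCongr (gA n m) (gA n m)

/-- `g̃_B = g_B ⊕ g_B`. -/
def gBt (n m : ℕ) : Equiv.Perm (DIdx n m) := Equiv.sumCongr (gB n m) (gB n m)

/-- `X̃ = X ⊕ X`. -/
def Xt (n m : ℕ) (hm : m % 2 = 0) : Equiv.Perm (DIdx n m) :=
  Equiv.sumCongr (Xel n m hm) (Xel n m hm)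

/-- The set of blocks of `P(X̃)`; it has `4n` elements. -/
abbrev BXt (n m : ℕ) (hm : m % 2 = 0) := Quotient (orbitSetoid (Xt n m hm))

/-- `q̃_A = q_{X̃}(g̃_A) ∈ P_{4n}`. -/
def qAt (n m : ℕ) (hm : m % 2 = 0) : Setoid (BXt n m hm) :=
  qc (Xt n m hm) (gAt n m)

/-- `q̃_B = q_{X̃}(g̃_B) ∈ P_{4n}`. -/
def qBt (n m : ℕ) (hm : m % 2 = 0) : Setoid (BXt n m hm) :=
  qc (Xt n m hm) (gBt n m)

/-- A block of `P(X̃)` lies in the first copy. -/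
def inCopy1 {n m : ℕ} {hm : m % 2 = 0} (u : BXt n m hm) : Prop :=
  ∃ x, Quotient.mk (orbitSetoid (Xt n m hm)) (Sum.inl x) = u

/-- `#₁⁽¹⁾(q)`: the number of singlets of `q` among the first-copy positions. -/
def nS1 {n m : ℕ} {hm : m % 2 = 0} (q : Setoid (BXt n m hm)) : ℤ :=
  Nat.card {u : BXt n m hm // IsSinglet q u ∧ inCopy1 u}

/-- `#₁⁽²⁾(q)`: the number of singlets of `q` among the second-copy positions. -/
def nS2 {n m : ℕ} {hm : m % 2 = 0} (q : Setoid (BXt n m hm)) : ℤ :=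
  Nat.card {u : BXt n m hm // IsSinglet q u ∧ ¬ inCopy1 u}

/-- `τ ∈ P_{4n}`, the two-block partition separating the two copies. -/
def tau (n m : ℕ) (hm : m % 2 = 0) : Setoid (BXt n m hm) where
  r u v := inCopy1 u ↔ inCopy1 v
  iseqv := ⟨fun _ => Iff.rfl, Iff.symm, Iff.trans⟩

/-! ## Graphs, cuts and optimization programs -/

variable {V : Type*}

/-- Sum of an edge function along (the edge list of) a walk, with multiplicity. -/
def wkSum {β : Type*} [AddCommMonoid β] {G : SimpleGraph V} {x y : V}
    (f : Sym2 V → β) (L : G.Walk x y) : β :=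
  (L.edges.map f).sum

variable [Fintype V]

/-- Sum of an edge weight function over a set of edges. -/
def wsum (f : Sym2 V → ℝ) (S : Set (Sym2 V)) : ℝ :=
  ∑ e ∈ Finset.univ.filter (· ∈ S), f e

/-- The cut surface `μ(r)`: edges of `G` with one endpoint in `r`, the other outside. -/
def mu (G : SimpleGraph V) (r : Set V) : Set (Sym2 V) :=
  {e | e ∈ G.edgeSet ∧ ∃ x y, e = s(x, y) ∧ x ∈ r ∧ y ∉ r}

/-- `μ(r₁:r₂)`: edges of `G` with an endpoint in `r₁` and an endpoint in `r₂`. -/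
def mu2 (G : SimpleGraph V) (r₁ r₂ : Set V) : Set (Sym2 V) :=
  {e | e ∈ G.edgeSet ∧ ∃ x y, e = s(x, y) ∧ x ∈ r₁ ∧ y ∈ r₂}

/-- `r` is a cut for `X : Y`. -/
def IsCut (X Y r : Set V) : Prop := X ⊆ r ∧ Y ⊆ rᶜ

/-- The minimal cut area `𝒜(X:Y)`. -/
def minCut (G : SimpleGraph V) (w : Sym2 V → ℝ) (X Y : Set V) : ℝ :=
  sInf {a | ∃ r : Set V, IsCut X Y r ∧ a = wsum w (mu G r)}

/-- `(α,β,γ)` is a triway cut for `(A,B,C)`. -/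
def IsTriway (A B C α β γ : Set V) : Prop :=
  α ∪ β ∪ γ = Set.univ ∧ Disjoint α β ∧ Disjoint β γ ∧ Disjoint α γ ∧
    A ⊆ α ∧ B ⊆ β ∧ C ⊆ γ

/-- The area of a triway cut with tensions `(t_{A:B}, t_{B:C}, t_{C:A})`. -/
def triArea (G : SimpleGraph V) (w : Sym2 V → ℝ) (tAB tBC tCA : ℝ)
    (α β γ : Set V) : ℝ :=
  tAB * wsum w (mu2 G α β) + tBC * wsum w (mu2 G β γ) + tCA * wsum w (mu2 G γ α)

/-- The minimal triway cut area `𝒜_t(A:B:C)`. -/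
def triCut (G : SimpleGraph V) (w : Sym2 V → ℝ) (tAB tBC tCA : ℝ)
    (A B C : Set V) : ℝ :=
  sInf {a | ∃ α β γ : Set V, IsTriway A B C α β γ ∧ a = triArea G w tAB tBC tCA α β γ}

/-- Boundary data: `∂ = A ⊔ B ⊔ C` (pairwise disjoint). -/
def Bdy (A B C : Set V) : Prop := Disjoint A B ∧ Disjoint A C ∧ Disjoint B C

/-! ### The permutation optimization `R` -/

/-- The symmetric edge function induced by the Cayley distance of a vertex
configuration of permutations. -/
def permE {ι : Type*} [Fintype ι] (g : V → Equiv.Perm ι) : Sym2 V → ℝ :=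
  Sym2.lift ⟨fun x y => (cayley (g x) (g y) : ℝ),
    fun x y => congrArg Int.cast (cayley_comm (g x) (g y))⟩

/-- The free energy `R(g) = Σ_e w(e) d(g(x),g(y))`. -/
def Renergy {ι : Type*} [Fintype ι] (G : SimpleGraph V) (w : Sym2 V → ℝ)
    (g : V → Equiv.Perm ι) : ℝ :=
  wsum (fun e => w e * permE g e) G.edgeSet

/-- The optimal value `R` of the permutation optimization. -/
def Rval {ι : Type*} [Fintype ι] (G : SimpleGraph V) (w : Sym2 V → ℝ)
    (A B C : Set V) (g₁ g₂ : Equiv.Perm ι) : ℝ :=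
  sInf {a | ∃ g : V → Equiv.Perm ι,
    (∀ v ∈ A, g v = g₁) ∧ (∀ v ∈ B, g v = g₂) ∧ (∀ v ∈ C, g v = 1) ∧
    a = Renergy G w g}

/-! ### The set-partition optimization `Q` -/

/-- The symmetric integer edge function induced by the partition distance of a vertex
configuration of partitions. -/
def partEZ {κ : Type*} (q : V → Setoid κ) : Sym2 V → ℤ :=
  Sym2.lift ⟨fun x y => pdist (q x) (q y), fun x y => pdist_comm (q x) (q y)⟩

/-- The free energy `Q(q) = Σ_e w(e) d(q(x),q(y))`. -/
def Qenergy {κ : Type*} (G : SimpleGraph V) (w : Sym2 V → ℝ)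
    (q : V → Setoid κ) : ℝ :=
  wsum (fun e => w e * (partEZ q e : ℝ)) G.edgeSet

/-- The optimal value `Q` of the set-partition optimization. -/
def Qval {κ : Type*} (G : SimpleGraph V) (w : Sym2 V → ℝ)
    (A B C : Set V) (q₁ q₂ : Setoid κ) : ℝ :=
  sInf {a | ∃ q : V → Setoid κ,
    (∀ v ∈ A, q v = q₁) ∧ (∀ v ∈ B, q v = q₂) ∧ (∀ v ∈ C, q v = ⊥) ∧
    a = Qenergy G w q}

/-! ### The Boolean optimization `B` -/

/-- The Hamming distance between two bit strings. -/
def ham {κ : Type*} [Fintype κ] (b₁ b₂ : κ → Bool) : ℤ :=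
  ∑ k : κ, if b₁ k = b₂ k then 0 else 1

/-- The bit string `b(q)` of a partition: `false` exactly at singlets. -/
def bvec {κ : Type*} (p : Setoid κ) : κ → Bool :=
  fun u => if IsSinglet p u then false else true

/-- Feasibility of `r` for the Boolean program at configuration `b`. -/
def Bfeas {κ : Type*} [Fintype κ] (G : SimpleGraph V) (A B : Set V) (n : ℕ)
    (b : V → κ → Bool) (r : Sym2 V → ℕ) : Prop :=
  (∀ x ∈ A, ∀ y ∈ B, ∀ L : G.Walk x y,
    2 ∣ wkSum (fun e => (r e : ℤ)) L ∧
    wkSum (fun e => (r e : ℤ)) L ≥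
      2 * ((n : ℤ) - if ∀ v ∈ L.support, ∀ k, b v k = true then 1 else 0)) ∧
  (∀ x y : V, G.Adj x y → (r s(x, y) : ℤ) ≥ ⌈(ham (b x) (b y) : ℚ) / 2⌉)

/-- The inner Boolean optimum `B(b)` at a fixed Boolean configuration `b`. -/
def BvalAt {κ : Type*} [Fintype κ] (G : SimpleGraph V) (w : Sym2 V → ℝ)
    (A B : Set V) (n : ℕ) (b : V → κ → Bool) : ℝ :=
  sInf {a | ∃ r : Sym2 V → ℕ, Bfeas G A B n b r ∧
    a = wsum (fun e => w e * (r e : ℝ)) G.edgeSet}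

/-- The optimal value `B` of the Boolean optimization. -/
def Bval (κ : Type*) [Fintype κ] (G : SimpleGraph V) (w : Sym2 V → ℝ)
    (A B C : Set V) (n : ℕ) : ℝ :=
  sInf {a | ∃ b : V → κ → Bool,
    (∀ v ∈ A ∪ B, ∀ k, b v k = true) ∧ (∀ v ∈ C, ∀ k, b v k = false) ∧
    ∃ r : Sym2 V → ℕ, Bfeas G A B n b r ∧
      a = wsum (fun e => w e * (r e : ℝ)) G.edgeSet}

/-! ### The integer program `I` -/

/-- Feasibility of `(ρ,σ)` for the integer program. -/
def IPfeas (G : SimpleGraph V) (A B C : Set V) (n : ℕ) (ρ σ : Sym2 V → ℕ) : Prop :=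
  (∀ x ∈ A, ∀ y ∈ B, ∀ L : G.Walk x y,
    2 ∣ wkSum (fun e => (σ e : ℤ) + (ρ e : ℤ)) L ∧
    wkSum (fun e => (σ e : ℤ) + (ρ e : ℤ)) L ≥
      2 * ((n : ℤ) - if wkSum (fun e => (ρ e : ℤ)) L = 0 then 1 else 0)) ∧
  (∀ x ∈ A ∪ B, ∀ y ∈ C, ∀ L : G.Walk x y,
    wkSum (fun e => (ρ e : ℤ)) L ≥ (n : ℤ))

/-- The objective of the integer program. -/
def IPobj (G : SimpleGraph V) (w : Sym2 V → ℝ) (ρ σ : Sym2 V → ℕ) : ℝ :=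
  wsum (fun e => w e * ((σ e : ℝ) + (ρ e : ℝ))) G.edgeSet

/-- The optimal value `I` of the integer program. -/
def Ival (G : SimpleGraph V) (w : Sym2 V → ℝ) (A B C : Set V) (n : ℕ) : ℝ :=
  sInf {a | ∃ ρ σ : Sym2 V → ℕ, IPfeas G A B C n ρ σ ∧ a = IPobj G w ρ σ}

/-! ### The ℓ-intersecting cut problem `M` -/

/-- Feasibility for the `ℓ`-intersecting cut problem with boundary sets
`Γ₀, …, Γ_ℓ` and `C`, for a half-integer valued `ϱ`. -/
def Mfeas (G : SimpleGraph V) (Γ : ℕ → Set V) (ℓ : ℕ) (C : Set V)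
    (ϱ : Sym2 V → ℚ) : Prop :=
  (∀ e, ∃ j : ℕ, ϱ e = (j : ℚ) / 2) ∧
  (∀ k k' : ℕ, k ≤ ℓ → k' ≤ ℓ → ∀ x ∈ Γ k, ∀ y ∈ Γ k', ∀ L : G.Walk x y,
    ∃ j : ℕ, wkSum ϱ L = |(k : ℚ) - (k' : ℚ)| + (j : ℚ)) ∧
  (∀ k : ℕ, k ≤ ℓ → ∀ x ∈ Γ k, ∀ y ∈ C, ∀ L : G.Walk x y,
    ∃ j : ℕ, wkSum ϱ L = (ℓ : ℚ) / 2 + (j : ℚ))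

/-- The objective of the `ℓ`-intersecting cut problem. -/
def Mobj (G : SimpleGraph V) (w : Sym2 V → ℝ) (ϱ : Sym2 V → ℚ) : ℝ :=
  wsum (fun e => w e * (ϱ e : ℝ)) G.edgeSet

/-- The optimal value `M` of the `ℓ`-intersecting cut problem. -/
def Mval (G : SimpleGraph V) (w : Sym2 V → ℝ) (Γ : ℕ → Set V) (ℓ : ℕ)
    (C : Set V) : ℝ :=
  sInf {a | ∃ ϱ : Sym2 V → ℚ, Mfeas G Γ ℓ C ϱ ∧ a = Mobj G w ϱ}

/-- The complementary reduced graph `G^c`: the edges of `G` not lying entirely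
inside `V'`. -/
def reducedGraph (G : SimpleGraph V) (V' : Set V) : SimpleGraph V where
  Adj x y := G.Adj x y ∧ ¬ (x ∈ V' ∧ y ∈ V')
  symm := by
    constructor
    intro x y h
    exact ⟨h.1.symm, fun hc => h.2 ⟨hc.2, hc.1⟩⟩
  loopless := by
    constructor
    intro x h
    exact G.loopless.irrefl x h.1

end RTN

/-! A walk through `s(x, y)` leaves that edge at `x` or `y`. Prefixing its remainder with a
`ρ`-free walk from `A ∪ B` to that endpoint gives a walk from `A ∪ B` to `C` of the same
`ρ`-length, so the remainder alone has `ρ`-length at least `n`. -/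

namespace SimpleGraph.Walk

variable {V : Type*} {G : SimpleGraph V}

theorem exists_cons_edges_isSuffix_of_mem_edges {a c x y : V} {L : G.Walk a c}
    (h : s(x, y) ∈ L.edges) :
    ∃ v, (v = x ∨ v = y) ∧ ∃ q : G.Walk v c, s(x, y) :: q.edges <:+ L.edges := by
  induction L with
  | nil => simp at h
  | @cons _ b _ _ p ih =>
    rw [edges_cons, List.mem_cons] at h
    rcases h with hfirst | hlater
    · refine ⟨b, ?_, p, by rw [edges_cons, hfirst]⟩
      rcases Sym2.eq_iff.mp hfirst with ⟨-, rfl⟩ | ⟨rfl, -⟩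
      exacts [Or.inr rfl, Or.inl rfl]
    · obtain ⟨v, hv, q, hq⟩ := ih hlater
      exact ⟨v, hv, q, hq.trans (List.suffix_cons _ _)⟩

end SimpleGraph.Walk

namespace RTN

variable {V β : Type*} {G : SimpleGraph V}

theorem wkSum_append [AddCommMonoid β] (f : Sym2 V → β) {a b c : V} (p : G.Walk a b)
    (q : G.Walk b c) : wkSum f (p.append q) = wkSum f p + wkSum f q := by
  simp only [wkSum, SimpleGraph.Walk.edges_append, List.map_append, List.sum_append]

theorem wkSum_eq_zero [AddCommMonoid β] {f : Sym2 V → β} {a b : V} {p : G.Walk a b}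
    (hp : ∀ e ∈ p.edges, f e = 0) : wkSum f p = 0 :=
  List.sum_eq_zero (by simpa using hp)

theorem add_wkSum_le_of_isSuffix [AddCommMonoid β] [PartialOrder β] [IsOrderedAddMonoid β]
    {f : Sym2 V → β} (hf : ∀ e, 0 ≤ f e) {e : Sym2 V} {a b c : V} {L : G.Walk a c}
    {q : G.Walk b c} (h : e :: q.edges <:+ L.edges) : f e + wkSum f q ≤ wkSum f L := by
  simpa [wkSum] using (h.sublist.map f).sum_le_sum (by simp [hf])

end RTN

theorem rho_binding_estimate_general {V : Type*} (G : SimpleGraph V)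
    (A B C : Set V)
    {n : ℕ} (ρ : Sym2 V → ℕ)
    (hfeas : ∀ x ∈ A ∪ B, ∀ y ∈ C, ∀ L : G.Walk x y,
      (n : ℤ) ≤ RTN.wkSum (fun e => (ρ e : ℤ)) L)
    (x y : V)
    (hx : ∃ a ∈ A ∪ B, ∃ L : G.Walk a x, ∀ e ∈ L.edges, ρ e = 0)
    (hy : ∃ a ∈ A ∪ B, ∃ L : G.Walk a y, ∀ e ∈ L.edges, ρ e = 0) :
    ∀ a ∈ A ∪ B, ∀ c ∈ C, ∀ L : G.Walk a c, s(x, y) ∈ L.edges →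
      (n : ℤ) ≤ RTN.wkSum (fun e => (ρ e : ℤ)) L - (ρ s(x, y) : ℤ) := by
  intro _ _ c hc L hL
  obtain ⟨v, hv, q, hsuffix⟩ := L.exists_cons_edges_isSuffix_of_mem_edges hL
  have hρfree : ∃ a ∈ A ∪ B, ∃ L : G.Walk a v, ∀ e ∈ L.edges, ρ e = 0 := by
    rcases hv with rfl | rfl
    exacts [hx, hy]
  obtain ⟨a', ha', L₀, hL₀⟩ := hρfree
  have htail : (n : ℤ) ≤ RTN.wkSum (fun e => (ρ e : ℤ)) q := by
    have hwalk := hfeas a' ha' c hc (L₀.append q)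
    rwa [RTN.wkSum_append, RTN.wkSum_eq_zero (by simpa using hL₀), zero_add] at hwalk
  have hsplit := RTN.add_wkSum_le_of_isSuffix (fun e => Int.natCast_nonneg (ρ e)) hsuffix
  omega

/-- If `ρ : E → ℤ_{≥0}` satisfies `ρ(L) ≥ n` on all paths from `A∪B` to
`C`, and `e = {x,y}` is an edge whose endpoints are both reachable from `A∪B` along
`ρ`-free paths, then for every path `L ∈ 𝒫_{A∪B,C}` containing `e`: `ρ(L) - ρ(e) ≥ n`. -/
theorem rho_binding_estimate {V : Type*} [Fintype V] (G : SimpleGraph V)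
    (w : Sym2 V → ℝ) (hw : ∀ e, 0 ≤ w e) (A B C : Set V) (hbdy : RTN.Bdy A B C)
    {n : ℕ} (hn : 2 ≤ n) (ρ : Sym2 V → ℕ)
    (hfeas : ∀ x ∈ A ∪ B, ∀ y ∈ C, ∀ L : G.Walk x y,
      (n : ℤ) ≤ RTN.wkSum (fun e => (ρ e : ℤ)) L)
    (x y : V) (hxy : G.Adj x y)
    (hx : ∃ a ∈ A ∪ B, ∃ L : G.Walk a x, ∀ e ∈ L.edges, ρ e = 0)
    (hy : ∃ a ∈ A ∪ B, ∃ L : G.Walk a y, ∀ e ∈ L.edges, ρ e = 0) :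
    ∀ a ∈ A ∪ B, ∀ c ∈ C, ∀ L : G.Walk a c, s(x, y) ∈ L.edges →
      (n : ℤ) ≤ RTN.wkSum (fun e => (ρ e : ℤ)) L - (ρ s(x, y) : ℤ) :=
  rho_binding_estimate_general G A B C ρ hfeas x y hx hy
end
end

section
/- Let ℓ≥1 be an integer and consider the ℓ-intersecting cut problem on a weighted graph G=(V,E) with disjoint boundary vertex sets Γ₀,…,Γ_ℓ and C. Then its optimal value is M = ½ Σ_{k=0}^{ℓ−1} [𝒜((Γ₀∪…∪Γ_k):(Γ_{k+1}∪…∪Γ_ℓ∪C)) + 𝒜((Γ_{k+1}∪…∪Γ_ℓ):(Γ₀∪…∪Γ_k∪C))], a half sum of minimal cut areas; moreover for each k the two minimal cuts α_k and β_k realizing these areas can be chosen disjoint. -/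
open scoped Classical

noncomputable section

/-!
Upper bound: take minimal cuts `α_k, β_k` and let `ϱ(e)` be half the number of their surfaces
containing `e`. A walk crosses `μ(r)` an odd number of times exactly when `r` separates its ends,
and it is separated by `2|a - b|` of the cuts if it runs from `Γ_a` to `Γ_b`, by `ℓ` of them if
it runs from `Γ_a` to `C`; so `ϱ` is feasible and its cost is the half sum of the areas.

Lower bound: for feasible `ϱ` put `q = 2ϱ`, a natural number on each edge. In the walk metric of
`q`, `Γ_a` is at distance `≥ 2|a - b|` from `Γ_b` and at distance `≥ ℓ` from `C`, so the boundary
values `u = 0` on `Γ`, `u = ℓ` on `C` and `d = 2b` on `Γ_b`, `d = ℓ` on `C` extend to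
`q`-Lipschitz functions `u, d`. The sublevel sets of `u + d` at levels `2k, 2k + 1` are cuts for
`α_k`, the superlevel sets of `d - u` at the same levels are cuts for `β_k`, and counting levels
edge by edge bounds their total area by `∑ w(e) (|Δ(u + d)| + |Δ(d - u)|) ≤ ∑ w(e) 2q(e)`.

Disjoint minimisers come from uncrossing: by submodularity of the cut area, `α ∖ β` and
`β ∖ α` are again minimal.
-/

namespace IntersectingCut

open RTN SimpleGraph Finset

variable {V : Type*} {G : SimpleGraph V}

section Walks

variable {β : Type*} [AddCommMonoid β]

@[simp]
lemma wkSum_nil (f : Sym2 V → β) {x : V} : wkSum f (Walk.nil : G.Walk x x) = 0 := by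
  simp [wkSum]

@[simp]
lemma wkSum_cons (f : Sym2 V → β) {x y z : V} (h : G.Adj x y) (p : G.Walk y z) :
    wkSum f (Walk.cons h p) = f s(x, y) + wkSum f p := by
  simp [wkSum]

lemma wkSum_concat (f : Sym2 V → β) {x y z : V} (p : G.Walk x y) (h : G.Adj y z) :
    wkSum f (p.concat h) = wkSum f p + f s(y, z) := by
  simp [wkSum, Walk.edges_concat]

lemma wkSum_reverse (f : Sym2 V → β) {x y : V} (p : G.Walk x y) :
    wkSum f p.reverse = wkSum f p := by
  simp [wkSum]

lemma wkSum_add (f g : Sym2 V → β) {x y : V} (p : G.Walk x y) :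
    wkSum (fun e => f e + g e) p = wkSum f p + wkSum g p := by
  simp [wkSum, List.sum_map_add]

lemma wkSum_sum {ι : Type*} (s : Finset ι) (F : ι → Sym2 V → β) {x y : V} (p : G.Walk x y) :
    wkSum (fun e => ∑ i ∈ s, F i e) p = ∑ i ∈ s, wkSum (F i) p := by
  induction p with
  | nil => simp
  | cons h p ih => simp [ih, sum_add_distrib]

end Walks

lemma wkSum_natCast_div_two (q : Sym2 V → ℕ) {x y : V} (p : G.Walk x y) :
    wkSum (fun e => (q e : ℚ) / 2) p = ((wkSum q p : ℕ) : ℚ) / 2 := by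
  induction p with
  | nil => simp
  | cons h p ih => simp [ih, add_div]

section CutSurface

variable {r : Set V}

lemma mem_mu_iff {x y : V} (h : G.Adj x y) :
    s(x, y) ∈ mu G r ↔ (x ∈ r ∧ y ∉ r) ∨ (y ∈ r ∧ x ∉ r) := by
  constructor
  · rintro ⟨-, a, b, hab, ha, hb⟩
    rcases Sym2.eq_iff.mp hab with ⟨rfl, rfl⟩ | ⟨rfl, rfl⟩
    · exact Or.inl ⟨ha, hb⟩
    · exact Or.inr ⟨ha, hb⟩
  · rintro (⟨hx, hy⟩ | ⟨hy, hx⟩)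
    · exact ⟨h, x, y, rfl, hx, hy⟩
    · exact ⟨h, y, x, Sym2.eq_swap, hy, hx⟩

lemma mu_subset_edgeSet : mu G r ⊆ G.edgeSet := fun _ h => h.1

lemma mu_compl : mu G rᶜ = mu G r := by
  ext e
  constructor <;>
  · rintro ⟨he, a, b, rfl, ha, hb⟩
    exact ⟨he, b, a, Sym2.eq_swap, by simpa using hb, by simpa using ha⟩

lemma exists_wkSum_mu_indicator_eq (r : Set V) {x y : V} (p : G.Walk x y) :
    ∃ j : ℕ, wkSum (fun e => if e ∈ mu G r then 1 else 0) p =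
      (if x ∈ r ↔ y ∈ r then 0 else 1) + 2 * j := by
  induction p with
  | nil => exact ⟨0, by simp⟩
  | @cons a b c h p ih =>
    obtain ⟨j, hj⟩ := ih
    rw [wkSum_cons, hj, if_congr (mem_mu_iff h) rfl rfl]
    by_cases ha : a ∈ r <;> by_cases hb : b ∈ r <;> by_cases hc : c ∈ r <;>
      simp [ha, hb, hc] <;> first | exact ⟨j, by omega⟩ | exact ⟨j + 1, by omega⟩

end CutSurface

def cutCount {ι : Type*} (G : SimpleGraph V) (s : Finset ι) (R : ι → Set V) (e : Sym2 V) : ℕ :=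
  ∑ i ∈ s, if e ∈ mu G (R i) then 1 else 0

lemma exists_wkSum_cutCount_eq {ι : Type*} (s : Finset ι) (R : ι → Set V) {x y : V}
    (p : G.Walk x y) :
    ∃ j : ℕ,
      wkSum (cutCount G s R) p = ∑ i ∈ s, (if x ∈ R i ↔ y ∈ R i then 0 else 1) + 2 * j := by
  choose j hj using fun i => exists_wkSum_mu_indicator_eq (R i) p
  refine ⟨∑ i ∈ s, j i, ?_⟩
  unfold cutCount
  rw [wkSum_sum, sum_congr rfl fun i _ => hj i, sum_add_distrib, mul_sum]

section Area

variable [Fintype V]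

lemma wsum_mul_cutCount {ι : Type*} (w : Sym2 V → ℝ) (s : Finset ι) (R : ι → Set V) :
    wsum (fun e => w e * cutCount G s R e) G.edgeSet = ∑ i ∈ s, wsum w (mu G (R i)) := by
  simp only [wsum, cutCount, Nat.cast_sum, Nat.cast_ite, Nat.cast_one, Nat.cast_zero, mul_sum,
    mul_ite, mul_one, mul_zero]
  rw [sum_comm]
  refine sum_congr rfl fun i _ => ?_
  rw [← sum_filter, filter_filter]
  congr 1
  ext e
  simpa using fun h => mu_subset_edgeSet h

lemma wsum_le_wsum {f g : Sym2 V → ℝ} {S : Set (Sym2 V)} (h : ∀ e ∈ S, f e ≤ g e) :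
    wsum f S ≤ wsum g S :=
  sum_le_sum fun e he => h e (mem_filter.mp he).2

lemma wsum_add (f g : Sym2 V → ℝ) (S : Set (Sym2 V)) :
    wsum (fun e => f e + g e) S = wsum f S + wsum g S :=
  sum_add_distrib

lemma wsum_mu_inter_add_wsum_mu_union_le {w : Sym2 V → ℝ} (hw : ∀ e, 0 ≤ w e) (r s : Set V) :
    wsum w (mu G (r ∩ s)) + wsum w (mu G (r ∪ s)) ≤ wsum w (mu G r) + wsum w (mu G s) := by
  simp only [wsum, sum_filter, ← sum_add_distrib]
  refine sum_le_sum fun e _ => ?_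
  induction e using Sym2.inductionOn with
  | hf x y =>
    by_cases hxy : G.Adj x y
    · simp only [mem_mu_iff hxy, Set.mem_inter_iff, Set.mem_union]
      have := hw s(x, y)
      by_cases hxr : x ∈ r <;> by_cases hyr : y ∈ r <;> by_cases hxs : x ∈ s <;>
        by_cases hys : y ∈ s <;> simp [hxr, hyr, hxs, hys] <;> linarith
    · have : ∀ t : Set V, s(x, y) ∉ mu G t := fun _ h => hxy h.1
      simp [this]

lemma Mobj_eq_wsum_div_two {w : Sym2 V → ℝ} {ϱ : Sym2 V → ℚ} {q : Sym2 V → ℕ}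
    (hq : ∀ e, ϱ e = q e / 2) : Mobj G w ϱ = wsum (fun e => w e * q e) G.edgeSet / 2 := by
  simp only [Mobj, wsum, sum_div, hq]
  refine sum_congr rfl fun e _ => ?_
  push_cast
  ring

end Area

section MinCut

variable [Fintype V] (w : Sym2 V → ℝ) {X Y : Set V}

lemma finite_cutAreas : {a | ∃ r : Set V, IsCut X Y r ∧ a = wsum w (mu G r)}.Finite :=
  (Set.finite_range fun r : Set V => wsum w (mu G r)).subset fun _ ⟨r, _, ha⟩ => ⟨r, ha.symm⟩

lemma minCut_le {r : Set V} (hr : IsCut X Y r) : minCut G w X Y ≤ wsum w (mu G r) :=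
  csInf_le (finite_cutAreas w).bddBelow ⟨r, hr, rfl⟩

lemma exists_isCut_wsum_eq_minCut (h : Disjoint X Y) :
    ∃ r, IsCut X Y r ∧ wsum w (mu G r) = minCut G w X Y := by
  have hne : {a | ∃ r : Set V, IsCut X Y r ∧ a = wsum w (mu G r)}.Nonempty :=
    ⟨_, X, ⟨subset_rfl, h.subset_compl_left⟩, rfl⟩
  obtain ⟨r, hr, hr'⟩ := hne.csInf_mem (finite_cutAreas w)
  exact ⟨r, hr, hr'.symm⟩

/-- Uncrossing: if `α` and `β` are minimal, so are `α ∩ βᶜ` and `β ∩ αᶜ = (α ∪ βᶜ)ᶜ`. -/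
lemma exists_disjoint_minCuts (hw : ∀ e, 0 ≤ w e) {X' Y' : Set V} (hXY : Disjoint X Y)
    (hXY' : Disjoint X' Y') (hX : X ⊆ Y') (hX' : X' ⊆ Y) :
    ∃ α β, IsCut X Y α ∧ wsum w (mu G α) = minCut G w X Y ∧
      IsCut X' Y' β ∧ wsum w (mu G β) = minCut G w X' Y' ∧ Disjoint α β := by
  obtain ⟨α, hα, hαmin⟩ := exists_isCut_wsum_eq_minCut (G := G) w hXY
  obtain ⟨β, hβ, hβmin⟩ := exists_isCut_wsum_eq_minCut (G := G) w hXY'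
  have hα' : IsCut X Y (α ∩ βᶜ) :=
    ⟨Set.subset_inter hα.1 (hX.trans hβ.2), fun y hy h => hα.2 hy h.1⟩
  have hβ' : IsCut X' Y' (β ∩ αᶜ) :=
    ⟨Set.subset_inter hβ.1 (hX'.trans hα.2), fun y hy h => hβ.2 hy h.1⟩
  have hunion : α ∪ βᶜ = (β ∩ αᶜ)ᶜ := by
    rw [Set.compl_inter, compl_compl, Set.union_comm]
  have hsub := wsum_mu_inter_add_wsum_mu_union_le (G := G) hw α βᶜ
  rw [hunion, mu_compl, mu_compl, hαmin, hβmin] at hsub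
  have h1 := minCut_le (G := G) w hα'
  have h2 := minCut_le (G := G) w hβ'
  refine ⟨_, _, hα', by linarith, hβ', by linarith, ?_⟩
  exact Set.disjoint_left.mpr fun v hv hv' => hv.2 hv'.1

end MinCut

section Lipschitz

def EdgeLipschitz (G : SimpleGraph V) (q : Sym2 V → ℕ) (φ : V → ℕ) : Prop :=
  ∀ x y, G.Adj x y → φ y ≤ φ x + q s(x, y)

variable {q : Sym2 V → ℕ} {φ : V → ℕ}

lemma EdgeLipschitz.abs_sub_le (hφ : EdgeLipschitz G q φ) {x y : V} (h : G.Adj x y) :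
    |(φ x : ℤ) - φ y| ≤ q s(x, y) := by
  have hxy := hφ x y h
  have hyx := hφ y x h.symm
  rw [Sym2.eq_swap] at hyx
  rw [abs_le]
  constructor <;> omega

/-- McShane extension: `φ v = inf {c + dist_q(u, v) | (u, c) ∈ P}`. Where no walk reaches `v`
the infimum is the junk value `0`, which is harmless since reachability is shared by neighbours. -/
lemma exists_edgeLipschitz_extension (q : Sym2 V → ℕ) (P : Set (V × ℕ))
    (hP : ∀ p ∈ P, ∀ p' ∈ P, ∀ W : G.Walk p.1 p'.1, p'.2 ≤ p.2 + wkSum q W) :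
    ∃ φ : V → ℕ, EdgeLipschitz G q φ ∧ ∀ p ∈ P, φ p.1 = p.2 := by
  let D : V → Set ℕ := fun v => {n | ∃ p ∈ P, ∃ W : G.Walk p.1 v, n = p.2 + wkSum q W}
  refine ⟨fun v => sInf (D v), fun x y hxy => ?_, fun p hp => ?_⟩
  · by_cases hx : (D x).Nonempty
    · obtain ⟨p, hp, W, hn⟩ := Nat.sInf_mem hx
      calc sInf (D y) ≤ p.2 + wkSum q (W.concat hxy) := Nat.sInf_le ⟨p, hp, _, rfl⟩
        _ = sInf (D x) + q s(x, y) := by rw [wkSum_concat, hn, add_assoc]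
    · have hy : D y = ∅ := Set.eq_empty_of_forall_notMem fun n ⟨p, hp, W, _⟩ =>
        hx ⟨_, p, hp, W.concat hxy.symm, rfl⟩
      simp [hy]
  · have hmem : p.2 ∈ D p.1 := ⟨p, hp, Walk.nil, by simp⟩
    obtain ⟨p', hp', W, hn⟩ := Nat.sInf_mem ⟨_, hmem⟩
    refine le_antisymm (Nat.sInf_le hmem) ?_
    change p.2 ≤ sInf (D p.1)
    rw [hn]
    exact hP p' hp' p hp W

end Lipschitz

lemma cutCount_levelSets_le (φ : V → ℤ) (N : ℕ) {x y : V} (h : G.Adj x y) :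
    (cutCount G (range N) (fun j => {v | φ v ≤ j}) s(x, y) : ℤ) ≤ |φ x - φ y| := by
  rw [cutCount, ← card_filter, abs_sub_comm, ← max_sub_min_eq_abs,
    ← Int.toNat_of_nonneg (sub_nonneg.mpr min_le_max), ← Int.card_Ico, Nat.cast_le]
  refine card_le_card_of_injOn (fun j : ℕ => (j : ℤ)) (fun j hj => ?_)
    fun _ _ _ _ => Nat.cast_inj.mp
  simp only [coe_filter, mem_range, Set.mem_ofPred_eq, mem_mu_iff h] at hj
  simp only [coe_Ico, Set.mem_Ico]
  omega

def lowerBoundary (Γ : ℕ → Set V) (k : ℕ) : Set V := {x | ∃ i ≤ k, x ∈ Γ i}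

def upperBoundary (Γ : ℕ → Set V) (ℓ k : ℕ) : Set V := {x | ∃ i, k < i ∧ i ≤ ℓ ∧ x ∈ Γ i}

section Membership

variable {Γ : ℕ → Set V} {ℓ k a : ℕ} {C r : Set V} {x : V}

lemma mem_iff_le_of_isCut (hr : IsCut (lowerBoundary Γ k) (upperBoundary Γ ℓ k ∪ C) r)
    (ha : a ≤ ℓ) (hx : x ∈ Γ a) : x ∈ r ↔ a ≤ k :=
  ⟨fun h => by_contra fun hak => hr.2 (Or.inl ⟨a, by omega, ha, hx⟩) h,
    fun hak => hr.1 ⟨a, hak, hx⟩⟩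

lemma mem_iff_lt_of_isCut (hr : IsCut (upperBoundary Γ ℓ k) (lowerBoundary Γ k ∪ C) r)
    (ha : a ≤ ℓ) (hx : x ∈ Γ a) : x ∈ r ↔ k < a :=
  ⟨fun h => by_contra fun hak => hr.2 (Or.inl ⟨a, by omega, hx⟩) h,
    fun hak => hr.1 ⟨a, hak, ha, hx⟩⟩

end Membership

section Feasible

variable {Γ : ℕ → Set V} {ℓ : ℕ} {C : Set V} {ϱ : Sym2 V → ℚ} {q : Sym2 V → ℕ}

lemma two_mul_le_add_wkSum_of_Mfeas (hfe : Mfeas G Γ ℓ C ϱ) (hq : ∀ e, ϱ e = q e / 2)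
    {a b : ℕ} (ha : a ≤ ℓ) (hb : b ≤ ℓ) {x y : V} (hx : x ∈ Γ a) (hy : y ∈ Γ b)
    (W : G.Walk x y) : 2 * b ≤ 2 * a + wkSum q W := by
  obtain ⟨j, hj⟩ := hfe.2.1 a b ha hb x hx y hy W
  rw [funext hq, wkSum_natCast_div_two] at hj
  have hab : (b : ℚ) - a ≤ |(a : ℚ) - b| := by
    rw [abs_sub_comm]
    exact le_abs_self _
  have : (2 * b : ℚ) ≤ 2 * a + wkSum q W := by linarith [j.cast_nonneg (α := ℚ)]
  exact_mod_cast this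

lemma le_wkSum_of_Mfeas (hfe : Mfeas G Γ ℓ C ϱ) (hq : ∀ e, ϱ e = q e / 2)
    {a : ℕ} (ha : a ≤ ℓ) {x y : V} (hx : x ∈ Γ a) (hy : y ∈ C) (W : G.Walk x y) :
    ℓ ≤ wkSum q W := by
  obtain ⟨j, hj⟩ := hfe.2.2 a ha x hx y hy W
  rw [funext hq, wkSum_natCast_div_two] at hj
  have : (ℓ : ℚ) ≤ wkSum q W := by linarith [j.cast_nonneg (α := ℚ)]
  exact_mod_cast this

/-- The hypotheses on `c` say that it varies no faster than the distance bounds `2|a - b|`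
between `Γ_a`, `Γ_b` and `ℓ` between `Γ_b`, `C` that feasibility forces. -/
lemma exists_edgeLipschitz_of_Mfeas (hfe : Mfeas G Γ ℓ C ϱ) (hq : ∀ e, ϱ e = q e / 2)
    (c : ℕ → ℕ) (hcΓ : ∀ a b, a ≤ ℓ → b ≤ ℓ → c b ≤ c a + 2 * (b - a))
    (hcC : ∀ b ≤ ℓ, c b ≤ 2 * ℓ) :
    ∃ φ : V → ℕ, EdgeLipschitz G q φ ∧ (∀ b ≤ ℓ, ∀ v ∈ Γ b, φ v = c b) ∧ ∀ v ∈ C, φ v = ℓ := by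
  obtain ⟨φ, hφ, hP⟩ := exists_edgeLipschitz_extension (G := G) q
    {p | (∃ b ≤ ℓ, p.1 ∈ Γ b ∧ p.2 = c b) ∨ (p.1 ∈ C ∧ p.2 = ℓ)} <| by
    rintro ⟨x, m⟩ (⟨a, ha, hx, rfl⟩ | ⟨hx, rfl⟩) ⟨y, n⟩ (⟨b, hb, hy, rfl⟩ | ⟨hy, rfl⟩) W
    · have := two_mul_le_add_wkSum_of_Mfeas hfe hq ha hb hx hy W
      have := hcΓ a b ha hb
      dsimp only
      omega
    · exact (le_wkSum_of_Mfeas hfe hq ha hx hy W).trans le_add_self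
    · have := le_wkSum_of_Mfeas hfe hq hb hy hx W.reverse
      rw [wkSum_reverse] at this
      have := hcC b hb
      dsimp only
      omega
    · exact le_self_add
  exact ⟨φ, hφ, fun b hb v hv => hP (v, c b) (Or.inl ⟨b, hb, hv, rfl⟩),
    fun v hv => hP (v, ℓ) (Or.inr ⟨hv, rfl⟩)⟩

end Feasible

lemma sum_range_two_mul {M : Type*} [AddCommMonoid M] (f : ℕ → M) (n : ℕ) :
    ∑ j ∈ range (2 * n), f j = ∑ k ∈ range n, (f (2 * k) + f (2 * k + 1)) := by
  induction n with
  | zero => simp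
  | succ n ih => rw [mul_add_one, sum_range_succ, sum_range_succ, sum_range_succ, ih, add_assoc]

lemma abs_add_add_abs_sub_le {a b c : ℤ} (ha : |a| ≤ c) (hb : |b| ≤ c) :
    |a + b| + |b - a| ≤ 2 * c := by
  rw [abs_le] at ha hb
  rcases abs_cases (a + b) with ⟨h, -⟩ | ⟨h, -⟩ <;>
    rcases abs_cases (b - a) with ⟨h', -⟩ | ⟨h', -⟩ <;>
    rw [h, h'] <;> linarith [ha.1, ha.2, hb.1, hb.2]

section LevelSets

variable {Γ : ℕ → Set V} {ℓ : ℕ} {C : Set V} {u d : V → ℕ}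
  (hΓ : ∀ b ≤ ℓ, ∀ v ∈ Γ b, u v = 0 ∧ d v = 2 * b) (hC : ∀ v ∈ C, u v = ℓ ∧ d v = ℓ)
include hΓ hC

lemma isCut_sublevel {k j : ℕ} (hk : k < ℓ) (hj : 2 * k ≤ j) (hj' : j ≤ 2 * k + 1) :
    IsCut (lowerBoundary Γ k) (upperBoundary Γ ℓ k ∪ C) {v | (u v + d v : ℤ) ≤ j} := by
  refine ⟨fun v ⟨b, hb, hv⟩ => ?_, fun v hv hv' => ?_⟩
  · obtain ⟨hu, hd⟩ := hΓ b (by omega) v hv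
    simp only [Set.mem_ofPred_eq, hu, hd]
    omega
  · simp only [Set.mem_ofPred_eq] at hv'
    rcases hv with ⟨b, hb, hbℓ, hv⟩ | hv
    · obtain ⟨hu, hd⟩ := hΓ b hbℓ v hv
      rw [hu, hd] at hv'
      omega
    · obtain ⟨hu, hd⟩ := hC v hv
      rw [hu, hd] at hv'
      omega

lemma isCut_superlevel {k j : ℕ} (hk : k < ℓ) (hj : 2 * k ≤ j) (hj' : j ≤ 2 * k + 1) :
    IsCut (upperBoundary Γ ℓ k) (lowerBoundary Γ k ∪ C) {v | (d v - u v : ℤ) ≤ j}ᶜ := by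
  refine ⟨fun v ⟨b, hb, hbℓ, hv⟩ => ?_, fun v hv hv' => hv' ?_⟩
  · obtain ⟨hu, hd⟩ := hΓ b hbℓ v hv
    simp only [Set.mem_compl_iff, Set.mem_ofPred_eq, hu, hd]
    omega
  · simp only [Set.mem_ofPred_eq]
    rcases hv with ⟨b, hb, hv⟩ | hv
    · obtain ⟨hu, hd⟩ := hΓ b (by omega) v hv
      rw [hu, hd]
      omega
    · obtain ⟨hu, hd⟩ := hC v hv
      rw [hu, hd]
      omega

lemma two_mul_minCut_add_minCut_le [Fintype V] (w : Sym2 V → ℝ) {k : ℕ} (hk : k < ℓ) :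
    2 * (minCut G w (lowerBoundary Γ k) (upperBoundary Γ ℓ k ∪ C) +
      minCut G w (upperBoundary Γ ℓ k) (lowerBoundary Γ k ∪ C)) ≤
    wsum w (mu G {v | (u v + d v : ℤ) ≤ 2 * k}) + wsum w (mu G {v | (d v - u v : ℤ) ≤ 2 * k}) +
      (wsum w (mu G {v | (u v + d v : ℤ) ≤ 2 * k + 1}) +
        wsum w (mu G {v | (d v - u v : ℤ) ≤ 2 * k + 1})) := by
  have hα₀ := minCut_le (G := G) w (isCut_sublevel hΓ hC hk le_rfl (by omega) (j := 2 * k))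
  have hα₁ := minCut_le (G := G) w (isCut_sublevel hΓ hC hk (by omega) le_rfl (j := 2 * k + 1))
  have hβ₀ := minCut_le (G := G) w (isCut_superlevel hΓ hC hk le_rfl (by omega) (j := 2 * k))
  have hβ₁ := minCut_le (G := G) w (isCut_superlevel hΓ hC hk (by omega) le_rfl (j := 2 * k + 1))
  rw [mu_compl] at hβ₀ hβ₁
  push_cast at hα₀ hα₁ hβ₀ hβ₁
  linarith

end LevelSets

lemma cutCount_sublevel_add_cutCount_sublevel_le {q : Sym2 V → ℕ} {u d : V → ℕ}
    (hu : EdgeLipschitz G q u) (hd : EdgeLipschitz G q d) (N : ℕ) {x y : V} (h : G.Adj x y) :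
    (cutCount G (range N) (fun j => {v | (u v + d v : ℤ) ≤ j}) s(x, y) +
      cutCount G (range N) (fun j => {v | (d v - u v : ℤ) ≤ j}) s(x, y) : ℤ) ≤ 2 * q s(x, y) := by
  refine (add_le_add (cutCount_levelSets_le _ N h) (cutCount_levelSets_le _ N h)).trans ?_
  convert abs_add_add_abs_sub_le (hu.abs_sub_le h) (hd.abs_sub_le h) using 3 <;>
    first | rfl | ring

lemma disjoint_lowerBoundary_upperBoundary_union {Γ : ℕ → Set V} {ℓ k : ℕ} {C : Set V}
    (hdisj : ∀ i j, i ≤ ℓ → j ≤ ℓ → i ≠ j → Disjoint (Γ i) (Γ j))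
    (hdisjC : ∀ i, i ≤ ℓ → Disjoint (Γ i) C) (hk : k < ℓ) :
    Disjoint (lowerBoundary Γ k) (upperBoundary Γ ℓ k ∪ C) := by
  rw [Set.disjoint_left]
  rintro v ⟨i, hik, hv⟩ (⟨i', hki', hi'ℓ, hv'⟩ | hvC)
  · exact (hdisj i i' (by omega) hi'ℓ (by omega)).ne_of_mem hv hv' rfl
  · exact (hdisjC i (by omega)).ne_of_mem hv hvC rfl

lemma disjoint_upperBoundary_lowerBoundary_union {Γ : ℕ → Set V} {ℓ k : ℕ} {C : Set V}
    (hdisj : ∀ i j, i ≤ ℓ → j ≤ ℓ → i ≠ j → Disjoint (Γ i) (Γ j))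
    (hdisjC : ∀ i, i ≤ ℓ → Disjoint (Γ i) C) (hk : k < ℓ) :
    Disjoint (upperBoundary Γ ℓ k) (lowerBoundary Γ k ∪ C) := by
  rw [Set.disjoint_union_right]
  exact ⟨((disjoint_lowerBoundary_upperBoundary_union hdisj hdisjC hk).mono_right
    Set.subset_union_left).symm, Set.disjoint_left.mpr fun v ⟨i, _, hiℓ, hv⟩ hvC =>
      (hdisjC i hiℓ).ne_of_mem hv hvC rfl⟩

lemma exists_disjoint_minCuts_of_lt [Fintype V] (G : SimpleGraph V) {w : Sym2 V → ℝ}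
    (hw : ∀ e, 0 ≤ w e) {Γ : ℕ → Set V} {ℓ k : ℕ} {C : Set V}
    (hdisj : ∀ i j, i ≤ ℓ → j ≤ ℓ → i ≠ j → Disjoint (Γ i) (Γ j))
    (hdisjC : ∀ i, i ≤ ℓ → Disjoint (Γ i) C) (hk : k < ℓ) :
    ∃ α β, IsCut (lowerBoundary Γ k) (upperBoundary Γ ℓ k ∪ C) α ∧
      wsum w (mu G α) = minCut G w (lowerBoundary Γ k) (upperBoundary Γ ℓ k ∪ C) ∧
      IsCut (upperBoundary Γ ℓ k) (lowerBoundary Γ k ∪ C) β ∧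
      wsum w (mu G β) = minCut G w (upperBoundary Γ ℓ k) (lowerBoundary Γ k ∪ C) ∧
      Disjoint α β :=
  exists_disjoint_minCuts w hw (disjoint_lowerBoundary_upperBoundary_union hdisj hdisjC hk)
    (disjoint_upperBoundary_lowerBoundary_union hdisj hdisjC hk)
    Set.subset_union_left Set.subset_union_left

section Bounds

variable [Fintype V] {w : Sym2 V → ℝ} {Γ : ℕ → Set V} {ℓ : ℕ} {C : Set V}

lemma sum_minCut_le_two_mul_Mobj (hw : ∀ e, 0 ≤ w e) {ϱ : Sym2 V → ℚ}
    (hfe : Mfeas G Γ ℓ C ϱ) :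
    ∑ k ∈ range ℓ, (minCut G w (lowerBoundary Γ k) (upperBoundary Γ ℓ k ∪ C) +
      minCut G w (upperBoundary Γ ℓ k) (lowerBoundary Γ k ∪ C)) ≤ 2 * Mobj G w ϱ := by
  choose q hq using hfe.1
  obtain ⟨u, hu, hΓu, hCu⟩ := exists_edgeLipschitz_of_Mfeas hfe hq (fun _ => 0)
    (fun _ _ _ _ => Nat.zero_le _) (fun _ _ => Nat.zero_le _)
  obtain ⟨d, hd, hΓd, hCd⟩ := exists_edgeLipschitz_of_Mfeas hfe hq (fun b => 2 * b)
    (fun _ _ _ _ => by omega) (fun _ _ => by omega)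
  have hΓ : ∀ b ≤ ℓ, ∀ v ∈ Γ b, u v = 0 ∧ d v = 2 * b :=
    fun b hb v hv => ⟨hΓu b hb v hv, hΓd b hb v hv⟩
  have hC : ∀ v ∈ C, u v = ℓ ∧ d v = ℓ := fun v hv => ⟨hCu v hv, hCd v hv⟩
  let area : ℕ → ℝ := fun j =>
    wsum w (mu G {v | (u v + d v : ℤ) ≤ j}) + wsum w (mu G {v | (d v - u v : ℤ) ≤ j})
  have hedge : ∀ e ∈ G.edgeSet,
      w e * cutCount G (range (2 * ℓ)) (fun j => {v | (u v + d v : ℤ) ≤ j}) e +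
        w e * cutCount G (range (2 * ℓ)) (fun j => {v | (d v - u v : ℤ) ≤ j}) e ≤
      2 * (w e * q e) := by
    intro e he
    induction e using Sym2.ind with
    | h x y =>
      rw [← mul_add, mul_left_comm]
      exact mul_le_mul_of_nonneg_left
        (by exact_mod_cast cutCount_sublevel_add_cutCount_sublevel_le hu hd _ he) (hw _)
  suffices 2 * ∑ k ∈ range ℓ, (minCut G w (lowerBoundary Γ k) (upperBoundary Γ ℓ k ∪ C) +
      minCut G w (upperBoundary Γ ℓ k) (lowerBoundary Γ k ∪ C)) ≤ 4 * Mobj G w ϱ by linarith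
  calc _ ≤ ∑ k ∈ range ℓ, (area (2 * k) + area (2 * k + 1)) := by
        rw [mul_sum]
        exact sum_le_sum fun k hk =>
          two_mul_minCut_add_minCut_le hΓ hC w (mem_range.mp hk)
    _ = ∑ j ∈ range (2 * ℓ), area j := (sum_range_two_mul area ℓ).symm
    _ = wsum (fun e => w e * cutCount G (range (2 * ℓ))
            (fun j => {v | (u v + d v : ℤ) ≤ j}) e) G.edgeSet +
          wsum (fun e => w e * cutCount G (range (2 * ℓ))
            (fun j => {v | (d v - u v : ℤ) ≤ j}) e) G.edgeSet := by
        rw [wsum_mul_cutCount, wsum_mul_cutCount, ← sum_add_distrib]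
    _ ≤ wsum (fun e => 2 * (w e * q e)) G.edgeSet := by
        rw [← wsum_add]
        exact wsum_le_wsum hedge
    _ = 4 * Mobj G w ϱ := by
        rw [Mobj_eq_wsum_div_two hq]
        unfold wsum
        rw [← mul_sum]
        ring

lemma sum_range_separating {a b : ℕ} (ha : a ≤ ℓ) (hb : b ≤ ℓ) :
    ((∑ k ∈ range ℓ, if (a ≤ k ↔ b ≤ k) then 0 else 1 : ℕ) : ℚ) = |(a : ℚ) - b| := by
  wlog hab : a ≤ b generalizing a b
  · rw [abs_sub_comm, ← this hb ha (by omega)]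
    exact congrArg _ (sum_congr rfl fun k _ => if_congr iff_comm rfl rfl)
  have hfilter : {k ∈ range ℓ | ¬(a ≤ k ↔ b ≤ k)} = Ico a b := by
    ext k
    simp only [mem_filter, mem_range, mem_Ico]
    omega
  rw [sum_congr rfl fun k _ => (ite_not _ 1 0).symm, ← card_filter, hfilter, Nat.card_Ico,
    Nat.cast_sub hab, abs_sub_comm, abs_of_nonneg (sub_nonneg.mpr (Nat.cast_le.mpr hab))]

lemma exists_Mfeas_Mobj_eq (w : Sym2 V → ℝ) {α β : ℕ → Set V}
    (hα : ∀ k < ℓ, IsCut (lowerBoundary Γ k) (upperBoundary Γ ℓ k ∪ C) (α k))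
    (hβ : ∀ k < ℓ, IsCut (upperBoundary Γ ℓ k) (lowerBoundary Γ k ∪ C) (β k)) :
    ∃ ϱ, Mfeas G Γ ℓ C ϱ ∧
      Mobj G w ϱ = (∑ k ∈ range ℓ, (wsum w (mu G (α k)) + wsum w (mu G (β k)))) / 2 := by
  let c : Sym2 V → ℕ := fun e => cutCount G (range ℓ) α e + cutCount G (range ℓ) β e
  have hc : ∀ {x y : V} (W : G.Walk x y), ∃ j : ℕ,
      wkSum (fun e => (c e : ℚ) / 2) W =
        ((∑ k ∈ range ℓ, ((if x ∈ α k ↔ y ∈ α k then 0 else 1) +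
          (if x ∈ β k ↔ y ∈ β k then 0 else 1)) : ℕ) : ℚ) / 2 + j := by
    intro x y W
    obtain ⟨i, hi⟩ := exists_wkSum_cutCount_eq (range ℓ) α W
    obtain ⟨j, hj⟩ := exists_wkSum_cutCount_eq (range ℓ) β W
    refine ⟨i + j, ?_⟩
    rw [wkSum_natCast_div_two, wkSum_add, hi, hj, sum_add_distrib]
    push_cast
    ring
  refine ⟨fun e => (c e : ℚ) / 2, ⟨fun e => ⟨_, rfl⟩, ?_, ?_⟩, ?_⟩
  · intro a b ha hb x hx y hy W
    obtain ⟨j, hj⟩ := hc W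
    have hcount : ∀ k ∈ range ℓ, ((if x ∈ α k ↔ y ∈ α k then 0 else 1) +
        (if x ∈ β k ↔ y ∈ β k then 0 else 1) : ℕ) = 2 * if (a ≤ k ↔ b ≤ k) then 0 else 1 := by
      intro k hk
      have hk := mem_range.mp hk
      simp only [mem_iff_le_of_isCut (hα k hk) ha hx, mem_iff_le_of_isCut (hα k hk) hb hy,
        mem_iff_lt_of_isCut (hβ k hk) ha hx, mem_iff_lt_of_isCut (hβ k hk) hb hy, ← not_le,
        not_iff_not]
      split_ifs <;> rfl
    refine ⟨j, ?_⟩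
    rw [hj, sum_congr rfl hcount, ← mul_sum, Nat.cast_mul, sum_range_separating ha hb]
    ring
  · intro a ha x hx y hy W
    obtain ⟨j, hj⟩ := hc W
    have hcount : ∀ k ∈ range ℓ, ((if x ∈ α k ↔ y ∈ α k then 0 else 1) +
        (if x ∈ β k ↔ y ∈ β k then 0 else 1) : ℕ) = 1 := by
      intro k hk
      have hk := mem_range.mp hk
      have hyα : y ∉ α k := fun h => (hα k hk).2 (Or.inr hy) h
      have hyβ : y ∉ β k := fun h => (hβ k hk).2 (Or.inr hy) h
      simp only [mem_iff_le_of_isCut (hα k hk) ha hx, mem_iff_lt_of_isCut (hβ k hk) ha hx, hyα,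
        hyβ, iff_false]
      by_cases hak : a ≤ k <;> simp [hak]
    refine ⟨j, ?_⟩
    rw [hj, sum_congr rfl hcount]
    simp
  · rw [Mobj_eq_wsum_div_two fun _ => rfl]
    simp only [c, Nat.cast_add, mul_add]
    rw [wsum_add, wsum_mul_cutCount, wsum_mul_cutCount, sum_add_distrib]

end Bounds

end IntersectingCut

theorem intersecting_cut_value_general {V : Type*} [Fintype V] (G : SimpleGraph V)
    (w : Sym2 V → ℝ) (hw : ∀ e, 0 ≤ w e) (ℓ : ℕ)
    (Γ : ℕ → Set V) (C : Set V)
    (hdisj : ∀ i j, i ≤ ℓ → j ≤ ℓ → i ≠ j → Disjoint (Γ i) (Γ j))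
    (hdisjC : ∀ i, i ≤ ℓ → Disjoint (Γ i) C) :
    ∃ α β : ℕ → Set V,
      (∀ k < ℓ,
        RTN.IsCut {x | ∃ i ≤ k, x ∈ Γ i}
          ({x | ∃ i, k < i ∧ i ≤ ℓ ∧ x ∈ Γ i} ∪ C) (α k) ∧
        RTN.wsum w (RTN.mu G (α k)) =
          RTN.minCut G w {x | ∃ i ≤ k, x ∈ Γ i}
            ({x | ∃ i, k < i ∧ i ≤ ℓ ∧ x ∈ Γ i} ∪ C) ∧
        RTN.IsCut {x | ∃ i, k < i ∧ i ≤ ℓ ∧ x ∈ Γ i}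
          ({x | ∃ i ≤ k, x ∈ Γ i} ∪ C) (β k) ∧
        RTN.wsum w (RTN.mu G (β k)) =
          RTN.minCut G w {x | ∃ i, k < i ∧ i ≤ ℓ ∧ x ∈ Γ i}
            ({x | ∃ i ≤ k, x ∈ Γ i} ∪ C) ∧
        Disjoint (α k) (β k)) ∧
      RTN.Mval G w Γ ℓ C =
        (∑ k ∈ Finset.range ℓ,
          (RTN.wsum w (RTN.mu G (α k)) + RTN.wsum w (RTN.mu G (β k)))) / 2 := by
  choose! α β hαβ using fun k (hk : k < ℓ) =>
    IntersectingCut.exists_disjoint_minCuts_of_lt G hw hdisj hdisjC hk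
  refine ⟨α, β, hαβ, ?_⟩
  obtain ⟨ϱ, hfe, hobj⟩ := IntersectingCut.exists_Mfeas_Mobj_eq (G := G) w
    (fun k hk => (hαβ k hk).1) (fun k hk => (hαβ k hk).2.2.1)
  refine IsLeast.csInf_eq ⟨⟨ϱ, hfe, hobj.symm⟩, ?_⟩
  rintro _ ⟨ϱ', hfe', rfl⟩
  rw [Finset.sum_congr rfl fun k hk => congrArg₂ (· + ·) (hαβ k (Finset.mem_range.mp hk)).2.1
    (hαβ k (Finset.mem_range.mp hk)).2.2.2.1]
  linarith [IntersectingCut.sum_minCut_le_two_mul_Mobj hw hfe']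

/-- The optimal value of the `ℓ`-intersecting cut problem is the half
sum of minimal cut areas
`M = ½ Σ_{k=0}^{ℓ-1} [𝒜((Γ₀∪…∪Γ_k):(Γ_{k+1}∪…∪Γ_ℓ∪C)) + 𝒜((Γ_{k+1}∪…∪Γ_ℓ):(Γ₀∪…∪Γ_k∪C))]`,
where for each `k` the minimizing cuts `α_k`, `β_k` can be chosen disjoint. -/
theorem intersecting_cut_value {V : Type*} [Fintype V] (G : SimpleGraph V)
    (w : Sym2 V → ℝ) (hw : ∀ e, 0 ≤ w e) (ℓ : ℕ) (hℓ : 1 ≤ ℓ)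
    (Γ : ℕ → Set V) (C : Set V)
    (hdisj : ∀ i j, i ≤ ℓ → j ≤ ℓ → i ≠ j → Disjoint (Γ i) (Γ j))
    (hdisjC : ∀ i, i ≤ ℓ → Disjoint (Γ i) C) :
    ∃ α β : ℕ → Set V,
      (∀ k < ℓ,
        RTN.IsCut {x | ∃ i ≤ k, x ∈ Γ i}
          ({x | ∃ i, k < i ∧ i ≤ ℓ ∧ x ∈ Γ i} ∪ C) (α k) ∧
        RTN.wsum w (RTN.mu G (α k)) =
          RTN.minCut G w {x | ∃ i ≤ k, x ∈ Γ i}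
            ({x | ∃ i, k < i ∧ i ≤ ℓ ∧ x ∈ Γ i} ∪ C) ∧
        RTN.IsCut {x | ∃ i, k < i ∧ i ≤ ℓ ∧ x ∈ Γ i}
          ({x | ∃ i ≤ k, x ∈ Γ i} ∪ C) (β k) ∧
        RTN.wsum w (RTN.mu G (β k)) =
          RTN.minCut G w {x | ∃ i, k < i ∧ i ≤ ℓ ∧ x ∈ Γ i}
            ({x | ∃ i ≤ k, x ∈ Γ i} ∪ C) ∧
        Disjoint (α k) (β k)) ∧
      RTN.Mval G w Γ ℓ C =
        (∑ k ∈ Finset.range ℓ,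
          (RTN.wsum w (RTN.mu G (α k)) + RTN.wsum w (RTN.mu G (β k)))) / 2 :=
  intersecting_cut_value_general G w hw ℓ Γ C hdisj hdisjC
end
end

section
/- Let G=(V,E) be a weighted graph with boundary ∂=A⊔B⊔C in which every connected component contains a boundary vertex, and fix integers n≥2 and even m≥2. Let g:V→S_{mn} be an optimal configuration for the permutation optimization R, and suppose the minimal cut r_{AB} for A∪B:C is unique. Then g(v)=id for every vertex v∈V∖r_{AB}. -/
open scoped Classical

noncomputable section

/-!
Write `d(u) = d(g(u), id)`, `N = mn`, and let `h` be `g` reset to `id` outside `r_{AB}`. Then `h`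
is admissible, so `R(g) ≤ R(h)` by optimality. The level sets `r_t = r_{AB} ∪ {d ≥ t}`,
`1 ≤ t ≤ N`, are cuts for `A ∪ B : C`, and the coarea formula together with the triangle
inequality for the Cayley distance, applied edge by edge, gives
`∑ₜ |μ(r_t)| + R(h) ≤ N |μ(r_{AB})| + R(g)`. Hence `∑ₜ |μ(r_t)| ≤ N · 𝒜(A ∪ B : C)`, so every
`r_t` is a minimal cut; uniqueness gives `r_1 = r_{AB}`, that is, `d = 0` outside `r_{AB}`.

The triangle inequality rests on `#(g τ) ≥ #(g) - 1` for a transposition `τ`, which is read off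
from the join of the cycle partition with the pair `τ` swaps.
-/

namespace RTN

section Perm

open Equiv

variable {α : Type*}

/-- `p ⊔ {x ∼ y}`, written as the kernel of the map merging the class of `y` into that of `x`
so that its classes can be counted. -/
def joinPair (p : Setoid α) (x y : α) : Setoid α :=
  Setoid.ker fun a =>
    if Quotient.mk p a = Quotient.mk p y then Quotient.mk p x else Quotient.mk p a

lemma joinPair_rel_iff {p : Setoid α} {x y a b : α} :
    (joinPair p x y).r a b ↔
      (if Quotient.mk p a = Quotient.mk p y then Quotient.mk p x else Quotient.mk p a) =
        if Quotient.mk p b = Quotient.mk p y then Quotient.mk p x else Quotient.mk p b :=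
  Iff.rfl

lemma le_joinPair (p : Setoid α) (x y : α) : p ≤ joinPair p x y := by
  intro a b hab
  rw [joinPair_rel_iff, Quotient.sound hab]

lemma joinPair_rel (p : Setoid α) (x y : α) : (joinPair p x y).r x y := by
  rw [joinPair_rel_iff, if_pos rfl]
  split_ifs <;> rfl

lemma joinPair_le {p s : Setoid α} {x y : α} (hp : p ≤ s) (hxy : s.r x y) :
    joinPair p x y ≤ s := by
  have hmk : ∀ {a b}, Quotient.mk p a = Quotient.mk p b → s.r a b :=
    fun h => hp (Quotient.exact h)
  intro a b hab
  rw [joinPair_rel_iff] at hab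
  split_ifs at hab with ha hb hb
  · exact s.trans (hmk ha) (s.symm (hmk hb))
  · exact s.trans (hmk ha) (s.trans (s.symm hxy) (hmk hab))
  · exact s.trans (hmk hab) (s.trans hxy (s.symm (hmk hb)))
  · exact hmk hab

lemma nb_joinPair [Finite α] (p : Setoid α) (x y : α) :
    nb (joinPair p x y) = if p.r x y then nb p else nb p - 1 := by
  unfold nb joinPair
  rw [Nat.card_congr (Setoid.quotientKerEquivRange _)]
  split_ifs with hxy
  · have hrange : Set.range (fun a => if Quotient.mk p a = Quotient.mk p y then
        Quotient.mk p x else Quotient.mk p a) = Set.univ := by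
      refine Set.eq_univ_of_forall fun c => ?_
      obtain ⟨a, rfl⟩ := Quotient.exists_rep c
      refine ⟨a, ?_⟩
      dsimp only
      split_ifs with ha
      · exact (Quotient.sound hxy).trans ha.symm
      · rfl
    rw [hrange, Nat.card_congr (Equiv.Set.univ _)]
  · have hne : Quotient.mk p x ≠ Quotient.mk p y := fun h => hxy (Quotient.exact h)
    have hrange : Set.range (fun a => if Quotient.mk p a = Quotient.mk p y then
        Quotient.mk p x else Quotient.mk p a) = {c | c ≠ Quotient.mk p y} := by
      ext c
      obtain ⟨a, rfl⟩ := Quotient.exists_rep c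
      constructor
      · rintro ⟨b, hb⟩
        dsimp only at hb
        split_ifs at hb with h
        · exact hb ▸ hne
        · exact hb ▸ h
      · exact fun ha => ⟨a, if_neg ha⟩
    rw [hrange, ← Nat.card_congr (Equiv.optionSubtypeNe (Quotient.mk p y)),
      Finite.card_option]
    push_cast
    rw [add_sub_cancel_right]
    rfl

lemma orbitSetoid_rel_apply (g : Perm α) (z : α) : (orbitSetoid g).r z (g z) := ⟨1, by simp⟩

lemma orbitSetoid_le [Finite α] {g : Perm α} {s : Setoid α} (hs : ∀ z, s.r z (g z)) :
    orbitSetoid g ≤ s := by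
  intro a b hab
  obtain ⟨i, -, rfl⟩ := Perm.SameCycle.exists_pow_eq' (f := g) hab
  clear hab
  induction i with
  | zero => exact s.refl a
  | succ i ih => exact s.trans ih (by rw [pow_succ', Perm.mul_apply]; exact hs _)

lemma joinPair_rel_swap (p : Setoid α) (x y z : α) : (joinPair p x y).r z (swap x y z) := by
  rcases eq_or_ne z x with rfl | hzx
  · rw [swap_apply_left]; exact joinPair_rel p z y
  rcases eq_or_ne z y with rfl | hzy
  · rw [swap_apply_right]; exact (joinPair p x z).symm (joinPair_rel p x z)
  · rw [swap_apply_of_ne_of_ne hzx hzy]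

lemma joinPair_orbitSetoid_mul_swap [Finite α] (g : Perm α) (x y : α) :
    joinPair (orbitSetoid (g * swap x y)) x y = joinPair (orbitSetoid g) x y := by
  have key : ∀ g : Perm α,
      joinPair (orbitSetoid (g * swap x y)) x y ≤ joinPair (orbitSetoid g) x y := by
    intro g
    refine joinPair_le (orbitSetoid_le fun z => ?_) (joinPair_rel _ x y)
    exact (joinPair _ x y).trans (joinPair_rel_swap _ x y z)
      (le_joinPair _ x y (orbitSetoid_rel_apply g _))
  refine le_antisymm (key g) ?_
  simpa only [mul_swap_mul_self] using key (g * swap x y)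

variable [Fintype α]

lemma ncyc_mul_swap_ge (g : Perm α) (x y : α) : ncyc g - 1 ≤ ncyc (g * swap x y) := by
  have h₁ := nb_joinPair (orbitSetoid g) x y
  have h₂ := nb_joinPair (orbitSetoid (g * swap x y)) x y
  rw [joinPair_orbitSetoid_mul_swap] at h₂
  unfold ncyc
  split_ifs at h₁ h₂ <;> omega

/-- Splitting off the transposition `(h z, z)` from `h` splits the cycle through `z`. -/
lemma exists_eq_mul_swap_ncyc_eq {h : Perm α} (h1 : h ≠ 1) :
    ∃ h' : Perm α, ∃ x y, h = h' * swap x y ∧ ncyc h' = ncyc h + 1 := by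
  obtain ⟨z, hz⟩ : ∃ z, h z ≠ z := not_forall.mp fun hc => h1 (Equiv.ext hc)
  refine ⟨h * swap (h z) z, h z, z, (mul_swap_mul_self _ _ h).symm, ?_⟩
  have hfix : (h * swap (h z) z) (h z) = h z := by rw [Perm.mul_apply, swap_apply_left]
  have hsep : ¬ (orbitSetoid (h * swap (h z) z)).r (h z) z := fun ⟨k, hk⟩ =>
    hz ((Perm.zpow_apply_eq_self_of_apply_eq_self hfix k).symm.trans hk)
  have h₁ := nb_joinPair (orbitSetoid h) (h z) z
  have h₂ := nb_joinPair (orbitSetoid (h * swap (h z) z)) (h z) z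
  rw [if_pos ((orbitSetoid h).symm (orbitSetoid_rel_apply h z))] at h₁
  rw [joinPair_orbitSetoid_mul_swap, if_neg hsep] at h₂
  unfold ncyc
  omega

lemma ncyc_le_card (g : Perm α) : ncyc g ≤ Fintype.card α := by
  unfold ncyc nb
  rw [← Nat.card_eq_fintype_card]
  exact_mod_cast Nat.card_le_card_of_surjective _ Quotient.mk_surjective

lemma ncyc_one : ncyc (1 : Perm α) = Fintype.card α := by
  have hinj : Function.Injective (Quotient.mk (orbitSetoid (1 : Perm α))) := by
    intro a b hab
    obtain ⟨k, hk⟩ := Quotient.exact hab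
    simpa using hk
  unfold ncyc nb
  rw [← Nat.card_eq_of_bijective _ ⟨hinj, Quotient.mk_surjective⟩, Nat.card_eq_fintype_card]

lemma ncyc_lt_card {g : Perm α} (hg : g ≠ 1) : ncyc g < Fintype.card α := by
  obtain ⟨g', x, y, -, hg'⟩ := exists_eq_mul_swap_ncyc_eq hg
  have := ncyc_le_card g'
  omega

/-- A transposition changes `#` by at most one, and `h` is a product of `N - #(h)` of them. -/
theorem ncyc_add_ncyc_le (g h : Perm α) : ncyc g + ncyc h ≤ ncyc (g * h) + Fintype.card α := by
  by_cases h1 : h = 1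
  · simp [h1, ncyc_one]
  obtain ⟨h', x, y, rfl, hh'⟩ := exists_eq_mul_swap_ncyc_eq h1
  have := ncyc_add_ncyc_le g h'
  have := ncyc_mul_swap_ge (g * h') x y
  rw [← mul_assoc]
  omega
termination_by (Fintype.card α - ncyc h).toNat
decreasing_by
  have := ncyc_le_card h'
  omega

lemma cayley_nonneg (g h : Perm α) : 0 ≤ cayley g h := by
  have := ncyc_le_card (g * h⁻¹)
  unfold cayley
  omega

lemma cayley_le_card (g h : Perm α) : cayley g h ≤ Fintype.card α := by
  have : 0 ≤ ncyc (g * h⁻¹) := Int.natCast_nonneg _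
  unfold cayley
  omega

lemma cayley_self (g : Perm α) : cayley g g = 0 := by
  rw [cayley, mul_inv_cancel, ncyc_one, sub_self]

lemma one_le_cayley {g h : Perm α} (hgh : g ≠ h) : 1 ≤ cayley g h := by
  have := ncyc_lt_card (mul_inv_eq_one.not.mpr hgh)
  unfold cayley
  omega

lemma cayley_triangle (g h k : Perm α) : cayley g k ≤ cayley g h + cayley h k := by
  have := ncyc_add_ncyc_le (g * h⁻¹) (h * k⁻¹)
  rw [show g * h⁻¹ * (h * k⁻¹) = g * k⁻¹ by group] at this
  unfold cayley
  omega

end Perm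

section Graph

open Finset

lemma card_filter_Icc_separating {N a b : ℤ} (ha : 0 ≤ a) (haN : a ≤ N) (hb : 0 ≤ b)
    (hbN : b ≤ N) :
    ((#{t ∈ Icc 1 N | (t ≤ a ∧ ¬ t ≤ b) ∨ (t ≤ b ∧ ¬ t ≤ a)} : ℕ) : ℤ) = |a - b| := by
  have hfilter : {t ∈ Icc 1 N | (t ≤ a ∧ ¬ t ≤ b) ∨ (t ≤ b ∧ ¬ t ≤ a)} =
      Icc (min a b + 1) (max a b) := by
    ext t
    simp only [mem_filter, mem_Icc]
    omega
  rw [hfilter, Int.card_Icc, abs_sub_comm, ← max_sub_min_eq_abs]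
  omega

lemma sum_Icc_one_const (N : ℕ) (c : ℝ) : ∑ _t ∈ Icc (1 : ℤ) N, c = N * c := by
  rw [sum_const, Int.card_Icc, nsmul_eq_mul, add_sub_cancel_right, Int.toNat_natCast]

variable {V ι : Type*} [Fintype ι]

def edgeGap (φ : V → ℤ) : Sym2 V → ℤ :=
  Sym2.lift ⟨fun x y => |φ x - φ y|, fun _ _ => abs_sub_comm _ _⟩

@[simp]
lemma edgeGap_mk (φ : V → ℤ) (x y : V) : edgeGap φ s(x, y) = |φ x - φ y| := rfl

@[simp]
lemma permE_mk (g : V → Equiv.Perm ι) (x y : V) : permE g s(x, y) = cayley (g x) (g y) := rfl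

lemma mem_mu_iff {G : SimpleGraph V} {r : Set V} {x y : V} (hadj : G.Adj x y) :
    s(x, y) ∈ mu G r ↔ (x ∈ r ∧ y ∉ r) ∨ (y ∈ r ∧ x ∉ r) := by
  constructor
  · rintro ⟨-, x', y', hxy', hx', hy'⟩
    rcases Sym2.eq_iff.mp hxy' with ⟨rfl, rfl⟩ | ⟨rfl, rfl⟩
    · exact Or.inl ⟨hx', hy'⟩
    · exact Or.inr ⟨hx', hy'⟩
  · rintro (⟨hx, hy⟩ | ⟨hy, hx⟩)
    · exact ⟨G.mem_edgeSet.mpr hadj, x, y, rfl, hx, hy⟩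
    · exact ⟨G.mem_edgeSet.mpr hadj, y, x, Sym2.eq_swap, hy, hx⟩

/-- The level sets `{t ≤ height r g}`, `1 ≤ t ≤ N`, are the cuts competing with `r`. -/
def height (r : Set V) (g : V → Equiv.Perm ι) : V → ℤ :=
  r.piecewise (fun _ => Fintype.card ι) fun u => cayley (g u) 1

lemma height_nonneg (r : Set V) (g : V → Equiv.Perm ι) (u : V) : 0 ≤ height r g u := by
  unfold height Set.piecewise
  split_ifs
  · exact Int.natCast_nonneg _
  · exact cayley_nonneg _ _

lemma height_le_card (r : Set V) (g : V → Equiv.Perm ι) (u : V) :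
    height r g u ≤ Fintype.card ι := by
  unfold height Set.piecewise
  split_ifs
  · exact le_rfl
  · exact cayley_le_card _ _

lemma isCut_levelSet_height {X Y r : Set V} (hr : IsCut X Y r) {g : V → Equiv.Perm ι}
    (hgY : ∀ v ∈ Y, g v = 1) {t : ℤ} (ht : t ∈ Icc (1 : ℤ) (Fintype.card ι)) :
    IsCut X Y {u | t ≤ height r g u} := by
  rw [mem_Icc] at ht
  refine ⟨fun u hu => ?_, fun u hu => ?_⟩
  · simp only [Set.mem_ofPred_eq, height, Set.piecewise_eq_of_mem _ _ _ (hr.1 hu), ht.2]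
  · simp only [Set.mem_compl_iff, Set.mem_ofPred_eq, height,
      Set.piecewise_eq_of_notMem _ _ _ (hr.2 hu), hgY u hu, cayley_self, not_le]
    exact ht.1

/-- The indicator term counts the `N` copies of the cut `μ(r)`; off `r` the inequality is the
triangle inequality for the Cayley distance. -/
lemma abs_sub_height_add_cayley_le (r : Set V) (g : V → Equiv.Perm ι) (x y : V) :
    |height r g x - height r g y| + cayley (r.piecewise g 1 x) (r.piecewise g 1 y) ≤
      |r.indicator (fun _ => (Fintype.card ι : ℤ)) x -
        r.indicator (fun _ => (Fintype.card ι : ℤ)) y| + cayley (g x) (g y) := by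
  have hxy := cayley_triangle (g x) (g y) 1
  have hyx := cayley_triangle (g y) (g x) 1
  have hx := cayley_le_card (g x) 1
  have hy := cayley_le_card (g y) 1
  rw [cayley_comm (g y) (g x)] at hyx
  unfold height
  by_cases hxr : x ∈ r <;> by_cases hyr : y ∈ r <;>
    simp only [Set.piecewise, Set.indicator, hxr, hyr, if_true, if_false, Pi.one_apply,
      cayley_self, cayley_comm 1 (g y), sub_self, sub_zero, zero_sub, abs_neg, abs_zero,
      Nat.abs_cast, le_refl] <;>
    rw [← le_sub_iff_add_le, abs_le] <;> constructor <;> omega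

variable [Fintype V]

lemma wsum_mu_eq_wsum_ite (G : SimpleGraph V) (w : Sym2 V → ℝ) (r : Set V) :
    wsum w (mu G r) = wsum (fun e => if e ∈ mu G r then w e else 0) G.edgeSet := by
  rw [wsum, wsum, sum_filter, sum_filter]
  refine sum_congr rfl fun e _ => ?_
  by_cases he : e ∈ mu G r
  · simp [he, he.1]
  · simp [he]

lemma wsum_mul_add (w a b : Sym2 V → ℝ) (S : Set (Sym2 V)) :
    wsum (fun e => w e * (a e + b e)) S =
      wsum (fun e => w e * a e) S + wsum (fun e => w e * b e) S := by
  simp only [wsum, mul_add, sum_add_distrib]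

lemma wsum_le_wsum {f f' : Sym2 V → ℝ} (h : ∀ e, f e ≤ f' e) (S : Set (Sym2 V)) :
    wsum f S ≤ wsum f' S :=
  sum_le_sum fun e _ => h e

/-- Discrete coarea formula. -/
theorem sum_wsum_mu_levelSet (G : SimpleGraph V) (w : Sym2 V → ℝ) {N : ℤ} {φ : V → ℤ}
    (h0 : ∀ u, 0 ≤ φ u) (hN : ∀ u, φ u ≤ N) :
    ∑ t ∈ Icc 1 N, wsum w (mu G {u | t ≤ φ u}) =
      wsum (fun e => w e * edgeGap φ e) G.edgeSet := by
  simp only [wsum_mu_eq_wsum_ite G w]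
  unfold wsum
  rw [sum_comm]
  refine sum_congr rfl fun e he => ?_
  induction e using Sym2.ind with
  | _ x y =>
    have hadj : G.Adj x y := by simpa using he
    simp only [mem_mu_iff hadj, Set.mem_ofPred_eq, edgeGap_mk]
    rw [← sum_filter, sum_const, nsmul_eq_mul, mul_comm]
    congr 1
    exact_mod_cast card_filter_Icc_separating (h0 x) (hN x) (h0 y) (hN y)

lemma minCut_le_wsum_mu (G : SimpleGraph V) (w : Sym2 V → ℝ) {X Y r : Set V}
    (hr : IsCut X Y r) : minCut G w X Y ≤ wsum w (mu G r) := by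
  refine csInf_le ?_ ⟨r, hr, rfl⟩
  refine ((Set.finite_range fun r : Set V => wsum w (mu G r)).subset ?_).bddBelow
  rintro _ ⟨r', -, rfl⟩
  exact ⟨r', rfl⟩

lemma Rval_le_Renergy (G : SimpleGraph V) (w : Sym2 V → ℝ) {A B C : Set V}
    {g₁ g₂ : Equiv.Perm ι} {g : V → Equiv.Perm ι} (hA : ∀ v ∈ A, g v = g₁)
    (hB : ∀ v ∈ B, g v = g₂) (hC : ∀ v ∈ C, g v = 1) :
    Rval G w A B C g₁ g₂ ≤ Renergy G w g := by
  refine csInf_le ?_ ⟨g, hA, hB, hC, rfl⟩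
  refine ((Set.finite_range fun g : V → Equiv.Perm ι => Renergy G w g).subset ?_).bddBelow
  rintro _ ⟨g', -, -, -, rfl⟩
  exact ⟨g', rfl⟩

lemma Renergy_le_Renergy_piecewise {G : SimpleGraph V} {w : Sym2 V → ℝ} {A B C r : Set V}
    {g₁ g₂ : Equiv.Perm ι} {g : V → Equiv.Perm ι} (hr : IsCut (A ∪ B) C r)
    (hA : ∀ v ∈ A, g v = g₁) (hB : ∀ v ∈ B, g v = g₂)
    (hopt : Renergy G w g = Rval G w A B C g₁ g₂) :
    Renergy G w g ≤ Renergy G w (r.piecewise g 1) := by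
  have hpiece : ∀ v ∈ A ∪ B, r.piecewise g 1 v = g v :=
    fun v hv => Set.piecewise_eq_of_mem _ _ _ (hr.1 hv)
  exact hopt ▸ Rval_le_Renergy G w (fun v hv => (hpiece v (.inl hv)).trans (hA v hv))
    (fun v hv => (hpiece v (.inr hv)).trans (hB v hv))
    (fun v hv => Set.piecewise_eq_of_notMem _ _ _ (hr.2 hv))

theorem sum_wsum_mu_levelSet_add_Renergy_le {G : SimpleGraph V} {w : Sym2 V → ℝ}
    (hw : ∀ e, 0 ≤ w e) (r : Set V) (g : V → Equiv.Perm ι) :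
    ∑ t ∈ Icc (1 : ℤ) (Fintype.card ι), wsum w (mu G {u | t ≤ height r g u}) +
        Renergy G w (r.piecewise g 1) ≤
      Fintype.card ι * wsum w (mu G r) + Renergy G w g := by
  set N : ℤ := (Fintype.card ι : ℤ)
  set ψ : V → ℤ := r.indicator fun _ => N
  have hψ0 : ∀ u, 0 ≤ ψ u := fun u => by by_cases hu : u ∈ r <;> simp [ψ, hu, N]
  have hψN : ∀ u, ψ u ≤ N := fun u => by by_cases hu : u ∈ r <;> simp [ψ, hu, N]
  have hψ : ∀ t ∈ Icc 1 N, {u | t ≤ ψ u} = r := by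
    intro t ht
    rw [mem_Icc] at ht
    ext u
    by_cases hu : u ∈ r <;> simp [ψ, hu] <;> omega
  have hedge : ∀ e, w e * (edgeGap (height r g) e + permE (r.piecewise g 1) e) ≤
      w e * (edgeGap ψ e + permE g e) := by
    intro e
    induction e using Sym2.ind with
    | _ x y =>
      refine mul_le_mul_of_nonneg_left ?_ (hw _)
      simp only [edgeGap_mk, permE_mk]
      exact_mod_cast abs_sub_height_add_cayley_le r g x y
  calc _ = wsum (fun e => w e * (edgeGap (height r g) e + permE (r.piecewise g 1) e))
          G.edgeSet := by
        rw [sum_wsum_mu_levelSet G w (height_nonneg r g) (height_le_card r g), Renergy,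
          wsum_mul_add]
    _ ≤ wsum (fun e => w e * (edgeGap ψ e + permE g e)) G.edgeSet := wsum_le_wsum hedge _
    _ = ∑ t ∈ Icc 1 N, wsum w (mu G {u | t ≤ ψ u}) + Renergy G w g := by
        rw [sum_wsum_mu_levelSet G w hψ0 hψN, Renergy, wsum_mul_add]
    _ = _ := by rw [sum_congr rfl fun t ht => by rw [hψ t ht], sum_Icc_one_const]

end Graph

end RTN

open RTN Finset

theorem optimal_is_id_outside_wedge_general {V : Type*} [Fintype V] (G : SimpleGraph V)
    (w : Sym2 V → ℝ) (hw : ∀ e, 0 ≤ w e) (A B C : Set V) {n m : ℕ}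
    (rAB : Set V) (hcut : RTN.IsCut (A ∪ B) C rAB)
    (hcutMin : RTN.wsum w (RTN.mu G rAB) = RTN.minCut G w (A ∪ B) C)
    (hcutUnique : ∀ r : Set V, RTN.IsCut (A ∪ B) C r →
      RTN.wsum w (RTN.mu G r) = RTN.minCut G w (A ∪ B) C → r = rAB)
    (g : V → Equiv.Perm (Fin n × Fin m))
    (hgA : ∀ v ∈ A, g v = RTN.gA n m) (hgB : ∀ v ∈ B, g v = RTN.gB n m)
    (hgC : ∀ v ∈ C, g v = 1)
    (hopt : RTN.Renergy G w g = RTN.Rval G w A B C (RTN.gA n m) (RTN.gB n m)) :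
    ∀ v ∈ rABᶜ, g v = 1 := by
  set N := Fintype.card (Fin n × Fin m)
  have hRg := Renergy_le_Renergy_piecewise hcut hgA hgB hopt
  have hmin : ∀ t ∈ Icc (1 : ℤ) N,
      minCut G w (A ∪ B) C ≤ wsum w (mu G {u | t ≤ height rAB g u}) :=
    fun t ht => minCut_le_wsum_mu G w (isCut_levelSet_height hcut hgC ht)
  have hsum : ∑ t ∈ Icc (1 : ℤ) N, wsum w (mu G {u | t ≤ height rAB g u}) ≤
      ∑ _t ∈ Icc (1 : ℤ) N, minCut G w (A ∪ B) C := by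
    have := sum_wsum_mu_levelSet_add_Renergy_le (G := G) hw rAB g
    rw [sum_Icc_one_const, ← hcutMin]
    linarith
  have hlevel_min := (sum_eq_sum_iff_of_le hmin).mp (le_antisymm (sum_le_sum hmin) hsum)
  intro v hv
  by_contra hne
  have hv1 : 1 ≤ height rAB g v := by
    rw [height, Set.piecewise_eq_of_notMem _ _ _ hv]
    exact one_le_cayley hne
  have h1 : (1 : ℤ) ∈ Icc (1 : ℤ) N :=
    mem_Icc.mpr ⟨le_rfl, hv1.trans (height_le_card rAB g v)⟩
  have hlevel_eq := hcutUnique _ (isCut_levelSet_height hcut hgC h1) (hlevel_min 1 h1).symm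
  exact hv (hlevel_eq ▸ hv1)

/-- If `g` is an optimal configuration for the permutation optimization
`R` and the minimal cut `r_{AB}` for `A∪B : C` is unique, then `g(v) = id` for every
vertex `v ∈ V ∖ r_{AB}`. -/
theorem optimal_is_id_outside_wedge {V : Type*} [Fintype V] (G : SimpleGraph V)
    (w : Sym2 V → ℝ) (hw : ∀ e, 0 ≤ w e) (A B C : Set V) (hbdy : RTN.Bdy A B C)
    (hcomp : ∀ v : V, ∃ b ∈ A ∪ B ∪ C, G.Reachable v b)
    {n m : ℕ} (hn : 2 ≤ n) (hm2 : 2 ≤ m) (hm : m % 2 = 0)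
    (rAB : Set V) (hcut : RTN.IsCut (A ∪ B) C rAB)
    (hcutMin : RTN.wsum w (RTN.mu G rAB) = RTN.minCut G w (A ∪ B) C)
    (hcutUnique : ∀ r : Set V, RTN.IsCut (A ∪ B) C r →
      RTN.wsum w (RTN.mu G r) = RTN.minCut G w (A ∪ B) C → r = rAB)
    (g : V → Equiv.Perm (Fin n × Fin m))
    (hgA : ∀ v ∈ A, g v = RTN.gA n m) (hgB : ∀ v ∈ B, g v = RTN.gB n m)
    (hgC : ∀ v ∈ C, g v = 1)
    (hopt : RTN.Renergy G w g = RTN.Rval G w A B C (RTN.gA n m) (RTN.gB n m)) :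
    ∀ v ∈ rABᶜ, g v = 1 :=
  optimal_is_id_outside_wedge_general G w hw A B C rAB hcut hcutMin hcutUnique g hgA hgB hgC hopt
end
end
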